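/- arXiv:2412.19650 — 2 statements merged into one kernel-verified Lean document; each statement's English description precedes it below -/
import Mathlib

section
/- Let x, w_1,…,w_N ∈ ℝ^d with ‖w_n‖ ≤ η for all n, and fix an index c. Define P_c(n) = exp(⟨w_c, w_n⟩)/Σ_m exp(⟨w_c, w_m⟩) and P_x(n) = exp(⟨x, w_n⟩)/Σ_m exp(⟨x, w_m⟩). Then for all n, e^{−2κ}·P_c(n) ≤ P_x(n) ≤ e^{2κ}·P_c(n), where κ = η·‖x − w_c‖. -/
open RealInnerProductSpace Finset

theorem softmax_anchor_approximation
    {d N : ℕ} (x : EuclideanSpace ℝ (Fin d))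
    (w : Fin N → EuclideanSpace ℝ (Fin d))
    (η : ℝ) (hη : ∀ n, ‖w n‖ ≤ η) (c : Fin N) :
    ∀ n,
      Real.exp (-(2 * (η * ‖x - w c‖))) *
          (Real.exp ⟪w c, w n⟫ / ∑ m, Real.exp ⟪w c, w m⟫)
        ≤ Real.exp ⟪x, w n⟫ / ∑ m, Real.exp ⟪x, w m⟫ ∧
      Real.exp ⟪x, w n⟫ / ∑ m, Real.exp ⟪x, w m⟫
        ≤ Real.exp (2 * (η * ‖x - w c‖)) *
            (Real.exp ⟪w c, w n⟫ / ∑ m, Real.exp ⟪w c, w m⟫) := by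
  intro n
  set κ := η * ‖x - w c‖ with hκ
  have hb : ∀ m, |⟪x - w c, w m⟫| ≤ κ := by
    intro m
    refine le_trans (abs_real_inner_le_norm _ _) ?_
    rw [hκ, mul_comm]
    exact mul_le_mul_of_nonneg_right (hη m) (norm_nonneg _)
  have hsplit : ∀ m : Fin N, ⟪x, w m⟫ = ⟪w c, w m⟫ + ⟪x - w c, w m⟫ := by
    intro m; rw [inner_sub_left]; ring
  have hlow : ∀ m, Real.exp (-κ) * Real.exp ⟪w c, w m⟫ ≤ Real.exp ⟪x, w m⟫ := by
    intro m
    rw [← Real.exp_add]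
    apply Real.exp_le_exp.2
    rw [hsplit m]
    have := (abs_le.1 (hb m)).1
    linarith
  have hhigh : ∀ m, Real.exp ⟪x, w m⟫ ≤ Real.exp κ * Real.exp ⟪w c, w m⟫ := by
    intro m
    rw [← Real.exp_add]
    apply Real.exp_le_exp.2
    rw [hsplit m]
    have := (abs_le.1 (hb m)).2
    linarith
  set Sc := ∑ m, Real.exp ⟪w c, w m⟫ with hSc
  set Sx := ∑ m, Real.exp ⟪x, w m⟫ with hSx
  have hScpos : 0 < Sc :=
    Finset.sum_pos (fun m _ => Real.exp_pos _) ⟨c, Finset.mem_univ c⟩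
  have hSxpos : 0 < Sx :=
    Finset.sum_pos (fun m _ => Real.exp_pos _) ⟨c, Finset.mem_univ c⟩
  have hSlow : Real.exp (-κ) * Sc ≤ Sx := by
    rw [hSc, hSx, Finset.mul_sum]
    exact Finset.sum_le_sum fun m _ => hlow m
  have hShigh : Sx ≤ Real.exp κ * Sc := by
    rw [hSc, hSx, Finset.mul_sum]
    exact Finset.sum_le_sum fun m _ => hhigh m
  constructor
  · have key : (Real.exp (-κ) * Real.exp ⟪w c, w n⟫) / (Real.exp κ * Sc)
        ≤ Real.exp ⟪x, w n⟫ / Sx :=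
      div_le_div₀ (Real.exp_pos _).le (hlow n) hSxpos hShigh
    calc Real.exp (-(2*κ)) * (Real.exp ⟪w c, w n⟫ / Sc)
        = (Real.exp (-κ) * Real.exp ⟪w c, w n⟫) / (Real.exp κ * Sc) := by
          rw [mul_div_mul_comm, ← Real.exp_sub]
          ring_nf
      _ ≤ Real.exp ⟪x, w n⟫ / Sx := key
  · have key : Real.exp ⟪x, w n⟫ / Sx
        ≤ (Real.exp κ * Real.exp ⟪w c, w n⟫) / (Real.exp (-κ) * Sc) :=
      div_le_div₀ (by positivity) (hhigh n) (by positivity) hSlow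
    calc Real.exp ⟪x, w n⟫ / Sx
        ≤ (Real.exp κ * Real.exp ⟪w c, w n⟫) / (Real.exp (-κ) * Sc) := key
      _ = Real.exp (2*κ) * (Real.exp ⟪w c, w n⟫ / Sc) := by
          rw [mul_div_mul_comm, ← Real.exp_sub]
          ring_nf
end

section
/- With the notation of the previous statement, if ‖x − w_c‖ → 0 then P_x(n) → P_c(n) for every n; more precisely |P_x(n) − P_c(n)| ≤ (e^{2κ} − 1)·P_c(n) with κ = η‖x − w_c‖. -/
open RealInnerProductSpace Finset

theorem softmax_anchor_tightness
    {d N : ℕ} (x : EuclideanSpace ℝ (Fin d))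
    (w : Fin N → EuclideanSpace ℝ (Fin d))
    (η : ℝ) (hη : ∀ n, ‖w n‖ ≤ η) (c : Fin N) :
    ∀ n,
      |Real.exp ⟪x, w n⟫ / ∑ m, Real.exp ⟪x, w m⟫
        - Real.exp ⟪w c, w n⟫ / ∑ m, Real.exp ⟪w c, w m⟫|
      ≤ (Real.exp (2 * (η * ‖x - w c‖)) - 1) *
          (Real.exp ⟪w c, w n⟫ / ∑ m, Real.exp ⟪w c, w m⟫) := by
  intro n
  set κ : ℝ := η * ‖x - w c‖ with hκdef
  have hκ0 : 0 ≤ κ := mul_nonneg ((norm_nonneg (w c)).trans (hη c)) (norm_nonneg _)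
  have key : ∀ m, |⟪x, w m⟫ - ⟪w c, w m⟫| ≤ κ := by
    intro m
    rw [← inner_sub_left]
    calc |⟪x - w c, w m⟫| ≤ ‖x - w c‖ * ‖w m‖ := abs_real_inner_le_norm _ _
      _ ≤ ‖x - w c‖ * η := by
          exact mul_le_mul_of_nonneg_left (hη m) (norm_nonneg _)
      _ = κ := by rw [hκdef]; ring
  have hE1 : ∀ m, Real.exp ⟪x, w m⟫ ≤ Real.exp κ * Real.exp ⟪w c, w m⟫ := by
    intro m
    rw [← Real.exp_add]
    exact Real.exp_le_exp.2 (by linarith [(abs_le.1 (key m)).2])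
  have hE2 : ∀ m, Real.exp ⟪w c, w m⟫ ≤ Real.exp κ * Real.exp ⟪x, w m⟫ := by
    intro m
    rw [← Real.exp_add]
    exact Real.exp_le_exp.2 (by linarith [(abs_le.1 (key m)).1])
  set S : ℝ := ∑ m, Real.exp ⟪x, w m⟫ with hSdef
  set T : ℝ := ∑ m, Real.exp ⟪w c, w m⟫ with hTdef
  have hS : 0 < S := Finset.sum_pos (fun m _ => Real.exp_pos _) ⟨n, mem_univ n⟩
  have hT : 0 < T := Finset.sum_pos (fun m _ => Real.exp_pos _) ⟨n, mem_univ n⟩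
  have hTS : T ≤ Real.exp κ * S := by
    rw [hTdef, hSdef, Finset.mul_sum]
    exact Finset.sum_le_sum fun m _ => hE2 m
  have hST : S ≤ Real.exp κ * T := by
    rw [hTdef, hSdef, Finset.mul_sum]
    exact Finset.sum_le_sum fun m _ => hE1 m
  set A : ℝ := Real.exp ⟪x, w n⟫ with hAdef
  set B : ℝ := Real.exp ⟪w c, w n⟫ with hBdef
  have hA : 0 < A := Real.exp_pos _
  have hB : 0 < B := Real.exp_pos _
  have hE : 0 < Real.exp κ := Real.exp_pos _
  have hEsq : Real.exp (2 * κ) = Real.exp κ * Real.exp κ := by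
    rw [← Real.exp_add]; ring_nf
  have hE2κ1 : 1 ≤ Real.exp (2 * κ) := Real.one_le_exp (by linarith)
  -- upper bound : A/S ≤ exp(2κ) * (B/T)
  have hup : A / S ≤ Real.exp (2 * κ) * (B / T) := by
    rw [← mul_div_assoc, div_le_div_iff₀ hS hT, hEsq]
    nlinarith [hE1 n, hTS, mul_le_mul_of_nonneg_left hTS hA.le,
      mul_le_mul_of_nonneg_right (hE1 n) (mul_pos hE hS).le]
  -- lower bound : B/T ≤ exp(2κ) * (A/S)
  have hlow : B / T ≤ Real.exp (2 * κ) * (A / S) := by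
    rw [← mul_div_assoc, div_le_div_iff₀ hT hS, hEsq]
    nlinarith [hE2 n, hST, mul_le_mul_of_nonneg_left hST hB.le,
      mul_le_mul_of_nonneg_right (hE2 n) (mul_pos hE hT).le]
  have hBT : 0 < B / T := div_pos hB hT
  have hAS : 0 < A / S := div_pos hA hS
  rw [abs_le]
  constructor
  · nlinarith [hlow, hBT.le, hAS.le, Real.exp_pos (2 * κ),
      mul_nonneg hBT.le (sq_nonneg (Real.exp (2 * κ) - 1))]
  · nlinarith [hup]
end
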